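/- arXiv:2605.30735 — 7 statements merged into one kernel-verified Lean document; each statement's English description precedes it below -/
import Mathlib

section
/- Ξ₂ is a barrier function on 𝒬_phys: if (Qₖ) is a sequence in 𝒬_phys converging to a real symmetric traceless 3×3 matrix Q₀ that has −1/3 or 2/3 as an eigenvalue, then Ξ₂(Qₖ) → +∞. -/
/-! On `𝒬_phys` both determinants in `Ξ₂` are products of eigenvalues lying in `(0, 1]`, so both
logarithmic terms are nonnegative. An eigenvalue `-1/3` (resp. `2/3`) of the limit `Q₀` is a zero
eigenvalue of `Q₀ + I/3` (resp. `I/3 - Q₀/2`), so by continuity of `det` the corresponding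
determinant tends to `0⁺` along `Qₖ`, and its term alone already drives `Ξ₂` to `+∞`. -/

open Filter

/-- The set of real symmetric traceless 3×3 matrices whose eigenvalues all lie in
the open interval (−1/3, 2/3). -/
def Qphys : Set (Matrix (Fin 3) (Fin 3) ℝ) :=
  {Q | Q.IsSymm ∧ Q.trace = 0 ∧ spectrum ℝ Q ⊆ Set.Ioo (-(1/3) : ℝ) (2/3)}

/-- The second-order quasi-entropy Ξ₂(Q) = −log det(Q + I/3) − 2 log det(I/3 − Q/2). -/
noncomputable def Xi2 (Q : Matrix (Fin 3) (Fin 3) ℝ) : ℝ :=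
  - Real.log (Q + (1/3 : ℝ) • (1 : Matrix (Fin 3) (Fin 3) ℝ)).det
    - 2 * Real.log ((1/3 : ℝ) • (1 : Matrix (Fin 3) (Fin 3) ℝ) - (1/2 : ℝ) • Q).det

open Matrix Set Topology
open scoped Pointwise

theorem spectrum.mem_smul_one_add_smul_iff {𝕜 A : Type*} [Field 𝕜] [Ring A] [Algebra 𝕜 A]
    {a : A} {r c : 𝕜} (hc : c ≠ 0) {μ : 𝕜} :
    μ ∈ spectrum 𝕜 (r • 1 + c • a) ↔ c⁻¹ * (μ - r) ∈ spectrum 𝕜 a := by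
  rw [← Algebra.algebraMap_eq_smul_one, ← spectrum.vadd_eq, ← Units.smul_mk0 hc,
    spectrum.unit_smul_eq_smul, mem_vadd_set_iff_neg_vadd_mem, Units.smul_mk0,
    mem_smul_set_iff_inv_smul_mem₀ hc, vadd_eq_add, smul_eq_mul, neg_add_eq_sub]

theorem Matrix.det_eq_zero_iff_zero_mem_spectrum {n K : Type*} [Fintype n] [DecidableEq n]
    [Field K] {A : Matrix n n K} : A.det = 0 ↔ (0 : K) ∈ spectrum K A := by
  rw [spectrum.zero_mem_iff, isUnit_iff_isUnit_det, isUnit_iff_ne_zero, not_not]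

theorem Matrix.IsHermitian.det_mem_Ioc_of_spectrum_subset {n : Type*} [Fintype n] [DecidableEq n]
    {A : Matrix n n ℝ} (hA : A.IsHermitian) (h : spectrum ℝ A ⊆ Ioc 0 1) :
    A.det ∈ Ioc 0 1 := by
  have hev i : hA.eigenvalues i ∈ Ioc 0 1 := h (hA.eigenvalues_mem_spectrum_real i)
  rw [hA.det_eq_prod_eigenvalues]
  exact ⟨Finset.prod_pos fun i _ => (hev i).1,
    Finset.prod_le_one (fun i _ => (hev i).1.le) fun i _ => (hev i).2⟩

theorem Matrix.tendsto_neg_log_det_atTop {α n : Type*} [Fintype n] [DecidableEq n] {l : Filter α}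
    {A : α → Matrix n n ℝ} {A₀ : Matrix n n ℝ} (hA : Tendsto A l (𝓝 A₀)) (h₀ : A₀.det = 0)
    (hpos : ∀ᶠ x in l, 0 < (A x).det) :
    Tendsto (fun x => -Real.log (A x).det) l atTop := by
  have hdet : Tendsto (fun x => (A x).det) l (𝓝[>] 0) :=
    tendsto_nhdsWithin_iff.2 ⟨h₀ ▸ (continuous_id.matrix_det.tendsto A₀).comp hA, hpos⟩
  exact tendsto_neg_atBot_atTop.comp (Real.tendsto_log_nhdsGT_zero.comp hdet)

section AffineSpectrum

variable {A : Type*} [Ring A] [Algebra ℝ A] {a : A} {μ : ℝ}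

theorem mem_spectrum_add_third_iff :
    μ ∈ spectrum ℝ (a + (1/3 : ℝ) • 1) ↔ μ - 1/3 ∈ spectrum ℝ a := by
  rw [add_comm, ← one_smul ℝ a, spectrum.mem_smul_one_add_smul_iff one_ne_zero, inv_one, one_mul,
    one_smul]

theorem mem_spectrum_third_sub_half_iff :
    μ ∈ spectrum ℝ ((1/3 : ℝ) • 1 - (1/2 : ℝ) • a) ↔ 2/3 - 2 * μ ∈ spectrum ℝ a := by
  rw [sub_eq_add_neg, ← neg_smul, spectrum.mem_smul_one_add_smul_iff (by norm_num)]
  exact iff_of_eq (congrArg (· ∈ spectrum ℝ a) (by ring))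

end AffineSpectrum

section Qphys

variable {Q : Matrix (Fin 3) (Fin 3) ℝ}

theorem det_add_third_mem_Ioc (hQ : Q ∈ Qphys) : (Q + (1/3 : ℝ) • 1).det ∈ Ioc 0 1 := by
  have hA : (Q + (1/3 : ℝ) • 1).IsHermitian :=
    isHermitian_iff_isSymm.2 (hQ.1.add (isSymm_one.smul _))
  refine hA.det_mem_Ioc_of_spectrum_subset fun μ hμ => ?_
  have := hQ.2.2 (mem_spectrum_add_third_iff.1 hμ)
  constructor <;> linarith [this.1, this.2]

theorem det_third_sub_half_mem_Ioc (hQ : Q ∈ Qphys) :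
    ((1/3 : ℝ) • 1 - (1/2 : ℝ) • Q).det ∈ Ioc 0 1 := by
  have hA : ((1/3 : ℝ) • 1 - (1/2 : ℝ) • Q).IsHermitian :=
    isHermitian_iff_isSymm.2 ((isSymm_one.smul _).sub (hQ.1.smul _))
  refine hA.det_mem_Ioc_of_spectrum_subset fun μ hμ => ?_
  have := hQ.2.2 (mem_spectrum_third_sub_half_iff.1 hμ)
  constructor <;> linarith [this.1, this.2]

theorem neg_log_det_add_third_le_Xi2 (hQ : Q ∈ Qphys) :
    -Real.log (Q + (1/3 : ℝ) • 1).det ≤ Xi2 Q := by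
  have := Real.log_nonpos (det_third_sub_half_mem_Ioc hQ).1.le (det_third_sub_half_mem_Ioc hQ).2
  unfold Xi2
  linarith

theorem two_mul_neg_log_det_third_sub_half_le_Xi2 (hQ : Q ∈ Qphys) :
    2 * -Real.log ((1/3 : ℝ) • 1 - (1/2 : ℝ) • Q).det ≤ Xi2 Q := by
  have := Real.log_nonpos (det_add_third_mem_Ioc hQ).1.le (det_add_third_mem_Ioc hQ).2
  unfold Xi2
  linarith

end Qphys

theorem Xi2_barrier_general (Q : ℕ → Matrix (Fin 3) (Fin 3) ℝ) (hQ : ∀ k, Q k ∈ Qphys)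
    (Q₀ : Matrix (Fin 3) (Fin 3) ℝ)
    (heig : (-(1/3) : ℝ) ∈ spectrum ℝ Q₀ ∨ (2/3 : ℝ) ∈ spectrum ℝ Q₀)
    (hlim : Tendsto Q atTop (nhds Q₀)) :
    Tendsto (fun k => Xi2 (Q k)) atTop atTop := by
  rcases heig with h | h
  · have h₀ : (Q₀ + (1/3 : ℝ) • 1).det = 0 := by
      rw [det_eq_zero_iff_zero_mem_spectrum, mem_spectrum_add_third_iff]
      convert h using 1
      norm_num
    exact tendsto_atTop_mono (fun k => neg_log_det_add_third_le_Xi2 (hQ k))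
      (tendsto_neg_log_det_atTop (hlim.add_const _) h₀
        (Eventually.of_forall fun k => (det_add_third_mem_Ioc (hQ k)).1))
  · have h₀ : ((1/3 : ℝ) • 1 - (1/2 : ℝ) • Q₀).det = 0 := by
      rw [det_eq_zero_iff_zero_mem_spectrum, mem_spectrum_third_sub_half_iff]
      convert h using 1
      norm_num
    exact tendsto_atTop_mono (fun k => two_mul_neg_log_det_third_sub_half_le_Xi2 (hQ k))
      ((tendsto_neg_log_det_atTop (tendsto_const_nhds.sub (hlim.const_smul _)) h₀
        (Eventually.of_forall fun k => (det_third_sub_half_mem_Ioc (hQ k)).1)).const_mul_atTop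
          two_pos)

/-- Ξ₂ is a barrier function on 𝒬_phys: along any sequence in 𝒬_phys converging to a
symmetric traceless matrix having −1/3 or 2/3 as an eigenvalue, Ξ₂ tends to +∞. -/
theorem Xi2_barrier (Q : ℕ → Matrix (Fin 3) (Fin 3) ℝ) (hQ : ∀ k, Q k ∈ Qphys)
    (Q₀ : Matrix (Fin 3) (Fin 3) ℝ) (hsymm : Q₀.IsSymm) (htr : Q₀.trace = 0)
    (heig : (-(1/3) : ℝ) ∈ spectrum ℝ Q₀ ∨ (2/3 : ℝ) ∈ spectrum ℝ Q₀)
    (hlim : Tendsto Q atTop (nhds Q₀)) :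
    Tendsto (fun k => Xi2 (Q k)) atTop atTop :=
  Xi2_barrier_general Q hQ Q₀ heig hlim
end

section
/- Let c ∈ ℝ and Q ∈ 𝒬_phys. If there exists μ ∈ ℝ such that −(Q + I/3)⁻¹ + (I/3 − Q/2)⁻¹ − c·Q = μ·I (i.e., Q is a stationary point of the bulk energy Ξ₂(Q) − (c/2)|Q|² within the space of symmetric traceless matrices), then Q is uniaxial: there exist s ∈ ℝ and a unit vector n ∈ ℝ³ with Q = s(n nᵀ − I/3); equivalently, Q has at most two distinct eigenvalues. -/
/-!
Diagonalising `Q` turns the stationarity equation into the scalar equation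
`-(λ + 1/3)⁻¹ + (1/3 - λ/2)⁻¹ - c λ = μ` for each eigenvalue `λ`, so every eigenvalue is a root
of the cubic `(μ + c t)(t + 1/3)(1/3 - t/2) = 3t/2`. If the three eigenvalues were distinct,
they would be the three roots of this cubic; since they sum to zero, Vieta's formulas force
`μ = c/3` and `λ₁ λ₂ λ₃ = 2/27`. But three reals summing to zero and all smaller than `2/3` have
product strictly below `2/27`. So two eigenvalues coincide, and `Q` is uniaxial along the
eigenvector of the remaining one.
-/

open Matrix

-- The derivative of the scalar bulk energy `-log (x + 1/3) - 2 log (1/3 - x/2) - c x² / 2`.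
noncomputable def bulkGrad (c x : ℝ) : ℝ := -(x + 1/3)⁻¹ + (1/3 - x/2)⁻¹ - c * x

lemma bulkGrad_eq_iff {c μ x : ℝ} (hx : x ∈ Set.Ioo (-(1/3) : ℝ) (2/3)) :
    bulkGrad c x = μ ↔ (μ + c * x) * ((x + 1/3) * (1/3 - x/2)) = 3/2 * x := by
  have h₁ : x + 1/3 ≠ 0 := by linarith [hx.1]
  have h₂ : 1/3 - x/2 ≠ 0 := by linarith [hx.2]
  have key : (bulkGrad c x - μ) * ((x + 1/3) * (1/3 - x/2))
      = 3/2 * x - (μ + c * x) * ((x + 1/3) * (1/3 - x/2)) := by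
    rw [bulkGrad]
    linear_combination (-(1/3 - x/2)) * mul_inv_cancel₀ h₁ + (x + 1/3) * mul_inv_cancel₀ h₂
  rw [← sub_eq_zero, ← mul_left_inj' (mul_ne_zero h₁ h₂), zero_mul, key, sub_eq_zero, eq_comm]

lemma mul_mul_eq_of_three_roots {c μ x y z : ℝ} (hxy : x ≠ y) (hxz : x ≠ z) (hyz : y ≠ z)
    (hsum : x + y + z = 0)
    (hx : (μ + c * x) * ((x + 1/3) * (1/3 - x/2)) = 3/2 * x)
    (hy : (μ + c * y) * ((y + 1/3) * (1/3 - y/2)) = 3/2 * y)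
    (hz : (μ + c * z) * ((z + 1/3) * (1/3 - z/2)) = 3/2 * z) :
    x * y * z = 2/27 := by
  have hV : (x - y) * (x - z) * (y - z) ≠ 0 := by
    simp [sub_ne_zero, hxy, hxz, hyz]
  -- second divided difference of the cubic: its `t²`-coefficient `c/6 - μ/2` vanishes
  have hμ : μ = c / 3 := by
    have : (x - y) * (x - z) * (y - z) * (μ - c / 3) = 0 := by
      linear_combination (-2) * ((y - z) * hx - (x - z) * hy + (x - y) * hz)
        - (x - y) * (x - z) * (y - z) * c * hsum
    simpa [hV, sub_eq_zero] using this
  subst hμ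
  have hc : c ≠ 0 := by
    rintro rfl
    exact hxy (by linarith)
  -- with `μ = c/3` the cubic is `c (-t³/2 + t/6 + 1/27) = 3t/2`; sum it over the roots
  have : c * (x * y * z - 2/27) = 0 := by
    linear_combination (-2/3) * (hx + hy + hz)
      + (2/3) * ((c/6 - 3/2) - c/2 * (x^2 + y^2 + z^2 - x*y - y*z - z*x)) * hsum
  simpa [hc, sub_eq_zero] using this

lemma mul_mul_lt_of_add_add_eq_zero {x y z : ℝ} (hsum : x + y + z = 0)
    (hx : x < 2/3) (hy : y < 2/3) (hz : z < 2/3) : x * y * z < 2/27 := by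
  have of_pos : ∀ a b d : ℝ, 0 < a → a < 2/3 → a + b + d = 0 → a * b * d < 2/27 := by
    intro a b d ha ha' h
    obtain rfl : d = -a - b := by linarith
    have hcube : a ^ 3 < (2/3) ^ 3 := by gcongr
    have hid : a * b * (-a - b) = a ^ 3 / 4 - a * (2 * b + a) ^ 2 / 4 := by ring
    nlinarith [mul_nonneg ha.le (sq_nonneg (2 * b + a))]
  rcases lt_or_ge 0 x with hx0 | hx0
  · exact of_pos x y z hx0 hx hsum
  rcases lt_or_ge 0 y with hy0 | hy0
  · linarith [of_pos y x z hy0 hy (by linarith)]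
  rcases lt_or_ge 0 z with hz0 | hz0
  · linarith [of_pos z x y hz0 hz (by linarith)]
  obtain rfl : x = 0 := by linarith
  norm_num

lemma eq_or_eq_or_eq_of_bulkGrad_eq {c μ x y z : ℝ} (hx : x ∈ Set.Ioo (-(1/3) : ℝ) (2/3))
    (hy : y ∈ Set.Ioo (-(1/3) : ℝ) (2/3)) (hz : z ∈ Set.Ioo (-(1/3) : ℝ) (2/3))
    (hsum : x + y + z = 0) (hfx : bulkGrad c x = μ) (hfy : bulkGrad c y = μ)
    (hfz : bulkGrad c z = μ) :
    x = y ∨ x = z ∨ y = z := by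
  by_contra! h
  obtain ⟨hxy, hxz, hyz⟩ := h
  have hprod := mul_mul_eq_of_three_roots hxy hxz hyz hsum ((bulkGrad_eq_iff hx).1 hfx)
    ((bulkGrad_eq_iff hy).1 hfy) ((bulkGrad_eq_iff hz).1 hfz)
  linarith [mul_mul_lt_of_add_add_eq_zero hsum hx.2 hy.2 hz.2]

section Hermitian

variable {n : Type*} [Fintype n] [DecidableEq n] {A : Matrix n n ℝ}

lemma cfc_bulkGrad (hA : A.IsHermitian) (hspec : spectrum ℝ A ⊆ Set.Ioo (-(1/3)) (2/3))
    (c : ℝ) :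
    cfc (bulkGrad c) A
      = -(A + (1/3 : ℝ) • 1)⁻¹ + ((1/3 : ℝ) • 1 - (1/2 : ℝ) • A)⁻¹ - c • A := by
  have hA' : IsSelfAdjoint A := hA
  have hcont (f : ℝ → ℝ) : ContinuousOn f (spectrum ℝ A) := (finite_spectrum A).continuousOn f
  have hp : cfc (fun x : ℝ => x + 1/3) A = A + (1/3 : ℝ) • 1 := by
    rw [cfc_add_const (1/3) (fun x => x) A (hcont _), cfc_id' ℝ A, Algebra.algebraMap_eq_smul_one]
  have hq : cfc (fun x : ℝ => 1/3 - x/2) A = (1/3 : ℝ) • 1 - (1/2 : ℝ) • A := by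
    rw [cfc_sub (fun _ => 1/3) (fun x : ℝ => x / 2) A (hcont _) (hcont _), cfc_const (1/3 : ℝ) A,
      Algebra.algebraMap_eq_smul_one, ← cfc_smul_id (R := ℝ) (1/2 : ℝ) A]
    congr 2
    funext x
    simp only [smul_eq_mul]
    ring
  have h₁ : ∀ x ∈ spectrum ℝ A, x + 1/3 ≠ 0 := fun x hx => by linarith [(hspec hx).1]
  have h₂ : ∀ x ∈ spectrum ℝ A, 1/3 - x/2 ≠ 0 := fun x hx => by linarith [(hspec hx).2]
  rw [nonsing_inv_eq_ringInverse, nonsing_inv_eq_ringInverse, ← hp, ← hq,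
    ← cfc_inv _ A h₁ (hcont _), ← cfc_inv _ A h₂ (hcont _), ← cfc_neg, ← cfc_smul_id (R := ℝ) c A,
    ← cfc_add (a := A) (fun x => -(x + 1/3)⁻¹) (fun x => (1/3 - x/2)⁻¹) (hcont _) (hcont _),
    ← cfc_sub (fun x => -(x + 1/3)⁻¹ + (1/3 - x/2)⁻¹) (c • ·) A (hcont _) (hcont _)]
  rfl

lemma bulkGrad_eq_of_mem_spectrum (hA : A.IsHermitian)
    (hspec : spectrum ℝ A ⊆ Set.Ioo (-(1/3)) (2/3)) {c μ : ℝ}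
    (hstat : -(A + (1/3 : ℝ) • 1)⁻¹ + ((1/3 : ℝ) • 1 - (1/2 : ℝ) • A)⁻¹ - c • A = μ • 1)
    {x : ℝ} (hx : x ∈ spectrum ℝ A) :
    bulkGrad c x = μ := by
  rw [← cfc_bulkGrad hA hspec, ← Algebra.algebraMap_eq_smul_one, ← cfc_const μ A hA] at hstat
  exact eqOn_of_cfc_eq_cfc hstat ((finite_spectrum A).continuousOn _) continuousOn_const hA hx

lemma Matrix.IsHermitian.eq_smul_one_add_smul_vecMulVec (hA : A.IsHermitian) {k : n} {β : ℝ}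
    (hβ : ∀ i ≠ k, hA.eigenvalues i = β) :
    A = β • 1 + (hA.eigenvalues k - β) •
      vecMulVec ⇑(hA.eigenvectorBasis k) ⇑(hA.eigenvectorBasis k) := by
  have hdiag : diagonal (RCLike.ofReal ∘ hA.eigenvalues)
      = β • (1 : Matrix n n ℝ) + (hA.eigenvalues k - β) • single k k 1 := by
    ext i j
    by_cases hij : i = j
    · subst hij
      by_cases hik : i = k
      · subst hik; simp
      · simp [Ne.symm hik, hβ i hik]
    · simp [single_apply, hij]
      rintro rfl rfl
      exact (hij rfl).elim
  conv_lhs => rw [hA.spectral_theorem, hdiag]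
  rw [map_add, map_smul, map_smul, map_one, Unitary.conjStarAlgAut_apply,
    single_eq_single_vecMulVec_single, mul_vecMulVec, vecMulVec_mul, eigenvectorUnitary_mulVec,
    star_eq_conjTranspose, conjTranspose_eq_transpose_of_trivial, vecMul_transpose,
    eigenvectorUnitary_mulVec]

end Hermitian

lemma Matrix.IsHermitian.exists_uniaxial_of_trace_eq_zero {Q : Matrix (Fin 3) (Fin 3) ℝ}
    (hQ : Q.IsHermitian) (htr : Q.trace = 0) {k : Fin 3} {β : ℝ}
    (hβ : ∀ i ≠ k, hQ.eigenvalues i = β) :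
    ∃ (s : ℝ) (n : Fin 3 → ℝ), (∑ i, n i ^ 2 = 1) ∧
      Q = s • (Matrix.vecMulVec n n - (1/3 : ℝ) • (1 : Matrix (Fin 3) (Fin 3) ℝ)) := by
  set v : Fin 3 → ℝ := ⇑(hQ.eigenvectorBasis k)
  set s := hQ.eigenvalues k - β
  have hv : ∑ i, v i ^ 2 = 1 := by
    have h := hQ.eigenvectorBasis.orthonormal.1 k
    rw [EuclideanSpace.norm_eq, Real.sqrt_eq_one] at h
    simpa using h
  have hQ_eq : Q = β • 1 + s • vecMulVec v v := hQ.eq_smul_one_add_smul_vecMulVec hβ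
  have hβs : β = -s / 3 := by
    have := congrArg trace hQ_eq
    simp only [trace_add, trace_smul, trace_one, trace_vecMulVec, dotProduct, ← sq, hv,
      htr] at this
    norm_num at this
    linarith
  refine ⟨s, v, hv, ?_⟩
  rw [hQ_eq, hβs]
  module

/-- A stationary point of the bulk energy Ξ₂(Q) − (c/2)|Q|² within the symmetric traceless
matrices (i.e. −(Q+I/3)⁻¹ + (I/3−Q/2)⁻¹ − cQ = μI for some Lagrange multiplier μ)
is uniaxial: Q = s (n nᵀ − I/3) for some s ∈ ℝ and unit vector n. -/
theorem stationary_point_is_uniaxial (c : ℝ) (Q : Matrix (Fin 3) (Fin 3) ℝ) (hQ : Q ∈ Qphys)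
    (hstat : ∃ μ : ℝ,
      -(Q + (1/3 : ℝ) • (1 : Matrix (Fin 3) (Fin 3) ℝ))⁻¹
        + ((1/3 : ℝ) • (1 : Matrix (Fin 3) (Fin 3) ℝ) - (1/2 : ℝ) • Q)⁻¹
        - c • Q = μ • (1 : Matrix (Fin 3) (Fin 3) ℝ)) :
    ∃ (s : ℝ) (n : Fin 3 → ℝ), (∑ i, n i ^ 2 = 1) ∧
      Q = s • (Matrix.vecMulVec n n - (1/3 : ℝ) • (1 : Matrix (Fin 3) (Fin 3) ℝ)) := by
  obtain ⟨hsymm, htr, hspec⟩ := hQ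
  obtain ⟨μ, hμ⟩ := hstat
  have hH : Q.IsHermitian := isHermitian_iff_isSymm.mpr hsymm
  set d := hH.eigenvalues
  have hd (i : Fin 3) : d i ∈ Set.Ioo (-(1/3) : ℝ) (2/3) :=
    hspec (hH.eigenvalues_mem_spectrum_real i)
  have hroot (i : Fin 3) : bulkGrad c (d i) = μ :=
    bulkGrad_eq_of_mem_spectrum hH hspec hμ (hH.eigenvalues_mem_spectrum_real i)
  have hsum : d 0 + d 1 + d 2 = 0 := by
    simpa [htr, Fin.sum_univ_three, eq_comm] using hH.trace_eq_sum_eigenvalues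
  obtain ⟨k, β, hβ⟩ : ∃ k β, ∀ i ≠ k, d i = β := by
    rcases eq_or_eq_or_eq_of_bulkGrad_eq (hd 0) (hd 1) (hd 2) hsum (hroot 0) (hroot 1) (hroot 2)
      with h | h | h
    · exact ⟨2, d 0, fun i hi => by fin_cases i <;> simp_all⟩
    · exact ⟨1, d 0, fun i hi => by fin_cases i <;> simp_all⟩
    · exact ⟨0, d 1, fun i hi => by fin_cases i <;> simp_all⟩
  exact hH.exists_uniaxial_of_trace_eq_zero htr hβ
end

section
/- Let f : S² → ℝ be continuous with f(m) > 0 for all m ∈ S², and let W be a nonzero real symmetric traceless 3×3 matrix. Then ∫_{S²} |m × (W m)|² f(m) dσ(m) > 0. -/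
open Matrix MeasureTheory Metric

/-! If `m × W m` vanished on all of S², it would vanish on ℝ³ by homogeneity; testing on
`e₁, e₂, e₃, e₁ + e₂, e₁ + e₃` then shows that `W` is a multiple of the identity, hence `W = 0`
since it is traceless. So the continuous nonnegative integrand is positive at some point, and
`σ` charges every nonempty open subset of S². -/

/-- The uniform (rotation-invariant) probability measure on the unit sphere S² ⊆ ℝ³. -/
noncomputable def sphereSigma : Measure (sphere (0 : EuclideanSpace ℝ (Fin 3)) 1) :=
  (((volume : Measure (EuclideanSpace ℝ (Fin 3))).toSphere) Set.univ)⁻¹ •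
    ((volume : Measure (EuclideanSpace ℝ (Fin 3))).toSphere)

theorem Matrix.eq_scalar_of_forall_cross_mulVec_self_eq_zero {R : Type*} [CommRing R]
    {W : Matrix (Fin 3) (Fin 3) R} (h : ∀ x, x ⨯₃ (W *ᵥ x) = 0) :
    W = Matrix.scalar (Fin 3) (W 0 0) := by
  have e0 := h ![1, 0, 0]
  have e1 := h ![0, 1, 0]
  have e2 := h ![0, 0, 1]
  have e01 := h ![1, 1, 0]
  have e02 := h ![1, 0, 1]
  simp [cross_apply, mulVec, dotProduct, Fin.sum_univ_three, funext_iff,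
    Fin.forall_fin_succ] at e0 e1 e2 e01 e02
  obtain ⟨h20, h10⟩ := e0
  obtain ⟨h21, h01⟩ := e1
  obtain ⟨h12, h02⟩ := e2
  have h11 : W 1 1 = W 0 0 := by linear_combination e01.2.2 - h10 + h01
  have h22 : W 2 2 = W 0 0 := by linear_combination -e02.2.1 + h02 - h20
  ext i j
  fin_cases i <;> fin_cases j <;> simp [*]

theorem Matrix.eq_zero_of_forall_cross_mulVec_self_eq_zero {K : Type*} [Field K] [CharZero K]
    {W : Matrix (Fin 3) (Fin 3) K} (htr : W.trace = 0) (h : ∀ x, x ⨯₃ (W *ᵥ x) = 0) :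
    W = 0 := by
  rw [eq_scalar_of_forall_cross_mulVec_self_eq_zero h] at htr ⊢
  simp_all

theorem smul_cross_mulVec_smul {R : Type*} [CommRing R] (W : Matrix (Fin 3) (Fin 3) R) (c : R)
    (x : Fin 3 → R) : (c • x) ⨯₃ (W *ᵥ (c • x)) = (c * c) • x ⨯₃ (W *ᵥ x) := by
  rw [mulVec_smul, map_smul, map_smul, LinearMap.smul_apply, smul_smul]

theorem exists_mem_sphere_cross_mulVec_ne_zero {W : Matrix (Fin 3) (Fin 3) ℝ}
    {x : Fin 3 → ℝ} (hx : x ⨯₃ (W *ᵥ x) ≠ 0) :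
    ∃ m : sphere (0 : EuclideanSpace ℝ (Fin 3)) 1, (m : Fin 3 → ℝ) ⨯₃ (W *ᵥ m) ≠ 0 := by
  have hx0 : WithLp.toLp 2 x ≠ 0 := by
    rintro h0
    apply hx
    simp [show x = 0 by simpa using h0]
  refine ⟨⟨‖WithLp.toLp 2 x‖⁻¹ • WithLp.toLp 2 x, by simp [norm_smul, hx0]⟩, ?_⟩
  change (‖WithLp.toLp 2 x‖⁻¹ • x) ⨯₃ (W *ᵥ (‖WithLp.toLp 2 x‖⁻¹ • x)) ≠ 0
  rw [smul_cross_mulVec_smul]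
  exact smul_ne_zero (by simpa using hx0) hx

instance : IsProbabilityMeasure sphereSigma :=
  have : NeZero (volume : Measure (EuclideanSpace ℝ (Fin 3))).toSphere :=
    ⟨Measure.toSphere_ne_zero _⟩
  isProbabilityMeasureSMul

instance : sphereSigma.IsOpenPosMeasure :=
  Measure.isOpenPosMeasure_smul _ (ENNReal.inv_ne_zero.2 (measure_ne_top _ _))

theorem integral_cross_sq_pos_general (f : sphere (0 : EuclideanSpace ℝ (Fin 3)) 1 → ℝ)
    (hf : Continuous f) (hpos : ∀ m, 0 < f m)
    (W : Matrix (Fin 3) (Fin 3) ℝ) (htr : W.trace = 0) (hW : W ≠ 0) :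
    0 < ∫ m, (∑ k, (crossProduct (fun i => (m : EuclideanSpace ℝ (Fin 3)) i)
        (W *ᵥ fun i => (m : EuclideanSpace ℝ (Fin 3)) i) k) ^ 2) * f m ∂sphereSigma := by
  obtain ⟨x, hx⟩ : ∃ x, x ⨯₃ (W *ᵥ x) ≠ 0 := by
    by_contra! h
    exact hW (eq_zero_of_forall_cross_mulVec_self_eq_zero htr h)
  obtain ⟨m₀, hm₀⟩ := exists_mem_sphere_cross_mulVec_ne_zero hx
  refine Continuous.integral_pos_of_hasCompactSupport_nonneg_nonzero (x := m₀) ?_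
    (.of_compactSpace _) (fun m => mul_nonneg (by positivity) (hpos m).le) ?_
  · simp only [cross_apply, Fin.sum_univ_three, mulVec, dotProduct]
    fun_prop
  · refine mul_ne_zero ?_ (hpos m₀).ne'
    simpa [dotProduct, sq] using mt dotProduct_self_eq_zero.1 hm₀

/-- For a continuous positive density f on S² and a nonzero symmetric traceless W,
∫_{S²} |m × (W m)|² f(m) dσ(m) > 0 (positive definiteness of the dissipation operator). -/
theorem integral_cross_sq_pos (f : sphere (0 : EuclideanSpace ℝ (Fin 3)) 1 → ℝ)
    (hf : Continuous f) (hpos : ∀ m, 0 < f m)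
    (W : Matrix (Fin 3) (Fin 3) ℝ) (hsymm : W.IsSymm) (htr : W.trace = 0) (hW : W ≠ 0) :
    0 < ∫ m, (∑ k, (crossProduct (fun i => (m : EuclideanSpace ℝ (Fin 3)) i)
        (W *ᵥ fun i => (m : EuclideanSpace ℝ (Fin 3)) i) k) ^ 2) * f m ∂sphereSigma :=
  integral_cross_sq_pos_general f hf hpos W htr hW
end

section
/- Let E be a finite-dimensional real inner product space, let F₊, F₋ : E → ℝ be differentiable convex functions, set F = F₊ − F₋, let M : E → E be a self-adjoint positive semidefinite linear map, and let δt > 0. Suppose Q, Q⁺ ∈ E satisfy Q⁺ − Q = −δt · M μ, where μ = ∇F₊(Q⁺) − ∇F₋(Q). Then F(Q⁺) ≤ F(Q) − δt ⟨μ, M μ⟩; in particular F(Q⁺) ≤ F(Q). -/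
open scoped RealInnerProductSpace

/-! A differentiable convex function lies above its tangent planes. Using this for `F₊` at `Q⁺`
and for `F₋` at `Q` and subtracting, the first-order terms combine to `⟪μ, Q⁺ - Q⟫`, which the
scheme turns into `-δt ⟪μ, M μ⟫`. -/

theorem ConvexOn.add_fderiv_le {E : Type*} [NormedAddCommGroup E] [NormedSpace ℝ E]
    {s : Set E} {f : E → ℝ} {f' : E →L[ℝ] ℝ} {x y : E} (hf : ConvexOn ℝ s f)
    (hx : x ∈ s) (hy : y ∈ s) (hf' : HasFDerivAt f f' x) :
    f x + f' (y - x) ≤ f y := by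
  set γ : ℝ →ᵃ[ℝ] E := AffineMap.lineMap x y
  have hγ0 : γ 0 = x := AffineMap.lineMap_apply_zero x y
  have hγ1 : γ 1 = y := AffineMap.lineMap_apply_one x y
  have hline : ConvexOn ℝ (γ ⁻¹' s) (f ∘ γ) := hf.comp_affineMap γ
  have hderiv : HasDerivAt (f ∘ γ) (f' (y - x)) 0 :=
    (hγ0 ▸ hf').comp_hasDerivAt 0 AffineMap.hasDerivAt_lineMap
  have hslope := hline.le_slope_of_hasDerivAt (x := 0) (y := 1)
    (by simpa [hγ0] using hx) (by simpa [hγ1] using hy) zero_lt_one hderiv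
  simp only [slope_def_field, Function.comp_apply, hγ0, hγ1, sub_zero, div_one] at hslope
  linarith

theorem ConvexOn.add_inner_gradient_le {E : Type*} [NormedAddCommGroup E]
    [InnerProductSpace ℝ E] [CompleteSpace E] {s : Set E} {f : E → ℝ} {x y : E}
    (hf : ConvexOn ℝ s f) (hx : x ∈ s) (hy : y ∈ s) (hdf : DifferentiableAt ℝ f x) :
    f x + ⟪gradient f x, y - x⟫ ≤ f y :=
  hf.add_fderiv_le hx hy hdf.hasGradientAt.hasFDerivAt

theorem convexSplitting_sub_le_sub_add_inner {E : Type*} [NormedAddCommGroup E]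
    [InnerProductSpace ℝ E] [CompleteSpace E] {s : Set E} {Fp Fm : E → ℝ}
    (hFp : ConvexOn ℝ s Fp) (hFm : ConvexOn ℝ s Fm) {Q Qp : E} (hQ : Q ∈ s) (hQp : Qp ∈ s)
    (hdFp : DifferentiableAt ℝ Fp Qp) (hdFm : DifferentiableAt ℝ Fm Q) :
    Fp Qp - Fm Qp ≤ Fp Q - Fm Q + ⟪gradient Fp Qp - gradient Fm Q, Qp - Q⟫ := by
  have hp := hFp.add_inner_gradient_le hQp hQ hdFp
  have hm := hFm.add_inner_gradient_le hQ hQp hdFm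
  rw [← neg_sub, inner_neg_right] at hp
  rw [inner_sub_left]
  linarith

theorem convex_splitting_dissipation_general
    {E : Type*} [NormedAddCommGroup E] [InnerProductSpace ℝ E] [FiniteDimensional ℝ E]
    (Fp Fm : E → ℝ)
    (hFp : Differentiable ℝ Fp) (hFm : Differentiable ℝ Fm)
    (hFpconv : ConvexOn ℝ Set.univ Fp) (hFmconv : ConvexOn ℝ Set.univ Fm)
    (M : E →ₗ[ℝ] E)
    (δt : ℝ)
    (Q Qp μ : E) (hμ : μ = gradient Fp Qp - gradient Fm Q)
    (hstep : Qp - Q = -(δt • M μ)) :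
    Fp Qp - Fm Qp ≤ Fp Q - Fm Q - δt * ⟪μ, M μ⟫ := by
  have hsplit := convexSplitting_sub_le_sub_add_inner hFpconv hFmconv trivial trivial (hFp Qp) (hFm Q)
  rwa [← hμ, hstep, inner_neg_right, real_inner_smul_right, ← sub_eq_add_neg] at hsplit

/-- Unconditional discrete energy dissipation of the first-order convex-splitting scheme:
if Q⁺ − Q = −δt·Mμ with μ = ∇F₊(Q⁺) − ∇F₋(Q), F₊, F₋ differentiable convex,
M self-adjoint positive semidefinite, then F(Q⁺) ≤ F(Q) − δt⟨μ, Mμ⟩ for F = F₊ − F₋. -/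
theorem convex_splitting_dissipation
    {E : Type*} [NormedAddCommGroup E] [InnerProductSpace ℝ E] [FiniteDimensional ℝ E]
    (Fp Fm : E → ℝ)
    (hFp : Differentiable ℝ Fp) (hFm : Differentiable ℝ Fm)
    (hFpconv : ConvexOn ℝ Set.univ Fp) (hFmconv : ConvexOn ℝ Set.univ Fm)
    (M : E →ₗ[ℝ] E) (hMsa : ∀ x y : E, ⟪M x, y⟫ = ⟪x, M y⟫)
    (hMpsd : ∀ x : E, 0 ≤ ⟪x, M x⟫)
    (δt : ℝ) (hδt : 0 < δt)
    (Q Qp μ : E) (hμ : μ = gradient Fp Qp - gradient Fm Q)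
    (hstep : Qp - Q = -(δt • M μ)) :
    Fp Qp - Fm Qp ≤ Fp Q - Fm Q - δt * ⟪μ, M μ⟫ :=
  convex_splitting_dissipation_general Fp Fm hFp hFm hFpconv hFmconv M δt Q Qp μ hμ hstep
end

section
/- Let θ₁, θ₂, θ₃ ∈ (0,1) with θ₁ + θ₂ + θ₃ = 1 and θ = min{θ₁, θ₂, θ₃}. Then the 2×2 symmetric matrix [[(1−θ₁)/2, (θ₃−θ₂)/2], [(θ₃−θ₂)/2, (1−θ₁−(2/5)θ)/2]] is positive definite, and likewise the matrices obtained by cyclically permuting (θ₁, θ₂, θ₃). -/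
/-!
Since `1 - θ₁ = θ₂ + θ₃`, the first block has determinant `(4 θ₂ θ₃ - (2/5) θ (θ₂ + θ₃)) / 4`,
which is positive because `θ (θ₂ + θ₃) ≤ 2 θ₂ θ₃` when `θ ≤ θ₂, θ₃`; a symmetric `2 × 2` matrix
with positive diagonal entry and positive determinant is positive definite.
-/

open Matrix

theorem posDef_of_det_pos_fin_two {a b c : ℝ} (ha : 0 < a) (hdet : b * b < a * c) :
    PosDef !![a, b; b, c] := by
  refine .of_dotProduct_mulVec_pos ?_ fun x hx => ?_
  · ext i j
    fin_cases i <;> fin_cases j <;> rfl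
  have hsq : a * (star x ⬝ᵥ !![a, b; b, c] *ᵥ x)
      = (a * x 0 + b * x 1) ^ 2 + (a * c - b * b) * x 1 ^ 2 := by
    simp only [dotProduct, Pi.star_apply, star_trivial, mulVec, of_apply, cons_val',
      cons_val_fin_one, Fin.sum_univ_two, cons_val_zero, cons_val_one]
    ring
  refine pos_of_mul_pos_right (hsq ▸ ?_) ha.le
  by_cases h1 : x 1 = 0
  · have h0 : x 0 ≠ 0 := fun h0 => hx (by ext i; fin_cases i <;> assumption)
    simp [h1, mul_ne_zero ha.ne' h0, sq_pos_of_ne_zero]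
  · exact add_pos_of_nonneg_of_pos (sq_nonneg _) (mul_pos (sub_pos.2 hdet) (sq_pos_of_ne_zero h1))

theorem posDef_block_of_le {x y t c : ℝ} (hx : 0 < x) (hy : 0 < y) (htx : t ≤ x) (hty : t ≤ y)
    (hc₀ : 0 ≤ c) (hc : c < 2) :
    PosDef !![(x + y) / 2, (y - x) / 2; (y - x) / 2, (x + y - c * t) / 2] := by
  refine posDef_of_det_pos_fin_two (by positivity) ?_
  have hxy : t * (x + y) ≤ 2 * (x * y) := by
    nlinarith [mul_le_mul_of_nonneg_left hty hx.le, mul_le_mul_of_nonneg_left htx hy.le]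
  nlinarith [mul_le_mul_of_nonneg_left hxy hc₀, mul_pos hx hy]

/-- Positive definiteness of the 2×2 blocks
[[(1−θ₁)/2, (θ₃−θ₂)/2], [(θ₃−θ₂)/2, (1−θ₁−(2/5)θ)/2]] (and its cyclic permutations)
for θ₁, θ₂, θ₃ ∈ (0,1) summing to 1, θ = min{θ₁,θ₂,θ₃}. -/
theorem block3_posdef (θ₁ θ₂ θ₃ : ℝ)
    (h1 : θ₁ ∈ Set.Ioo (0 : ℝ) 1) (h2 : θ₂ ∈ Set.Ioo (0 : ℝ) 1) (h3 : θ₃ ∈ Set.Ioo (0 : ℝ) 1)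
    (hsum : θ₁ + θ₂ + θ₃ = 1) :
    Matrix.PosDef !![(1 - θ₁) / 2, (θ₃ - θ₂) / 2;
                     (θ₃ - θ₂) / 2, (1 - θ₁ - (2/5) * min θ₁ (min θ₂ θ₃)) / 2] ∧
    Matrix.PosDef !![(1 - θ₂) / 2, (θ₁ - θ₃) / 2;
                     (θ₁ - θ₃) / 2, (1 - θ₂ - (2/5) * min θ₁ (min θ₂ θ₃)) / 2] ∧
    Matrix.PosDef !![(1 - θ₃) / 2, (θ₂ - θ₁) / 2;
                     (θ₂ - θ₁) / 2, (1 - θ₃ - (2/5) * min θ₁ (min θ₂ θ₃)) / 2] := by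
  have hθ₁ : min θ₁ (min θ₂ θ₃) ≤ θ₁ := min_le_left _ _
  have hθ₂ : min θ₁ (min θ₂ θ₃) ≤ θ₂ := (min_le_right _ _).trans (min_le_left _ _)
  have hθ₃ : min θ₁ (min θ₂ θ₃) ≤ θ₃ := (min_le_right _ _).trans (min_le_right _ _)
  rw [show 1 - θ₁ = θ₂ + θ₃ by linarith, show 1 - θ₂ = θ₃ + θ₁ by linarith,
    show 1 - θ₃ = θ₁ + θ₂ by linarith]
  exact ⟨posDef_block_of_le h2.1 h3.1 hθ₂ hθ₃ (by norm_num) (by norm_num),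
    posDef_block_of_le h3.1 h1.1 hθ₃ hθ₁ (by norm_num) (by norm_num),
    posDef_block_of_le h1.1 h2.1 hθ₁ hθ₂ (by norm_num) (by norm_num)⟩
end

section
/- Let θ₁, θ₂, θ₃ ∈ (0,1) with θ₁ + θ₂ + θ₃ = 1 and θ = min{θ₁, θ₂, θ₃}. Then the 2×2 symmetric matrix [[(9/8)(1 − θ₁ − θ/5), (3/8)(θ₂ − θ₃)], [(3/8)(θ₂ − θ₃), (3/8)(θ₁ + 1/3 − θ/5)]] is positive definite. -/
open Matrix

section

variable {R : Type*} [Field R] [LinearOrder R] [IsStrictOrderedRing R]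

theorem quadratic_pos_of_sq_lt_mul {a b c : R} (ha : 0 < a) (hdet : b ^ 2 < a * c) {x y : R}
    (hxy : x ≠ 0 ∨ y ≠ 0) : 0 < a * x ^ 2 + 2 * b * x * y + c * y ^ 2 := by
  have hsq : a * (a * x ^ 2 + 2 * b * x * y + c * y ^ 2) =
      (a * x + b * y) ^ 2 + (a * c - b ^ 2) * y ^ 2 := by ring
  refine pos_of_mul_pos_right (hsq ▸ ?_) ha.le
  rcases eq_or_ne y 0 with rfl | hy
  · have hx : x ≠ 0 := hxy.resolve_right (not_not_intro rfl)
    simpa using sq_pos_of_ne_zero (mul_ne_zero ha.ne' hx)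
  · exact add_pos_of_nonneg_of_pos (sq_nonneg _) (mul_pos (sub_pos.2 hdet) (sq_pos_of_ne_zero hy))

theorem Matrix.posDef_fin_two_of_sq_lt_mul [StarRing R] [TrivialStar R] {a b c : R} (ha : 0 < a)
    (hdet : b ^ 2 < a * c) : !![a, b; b, c].PosDef := by
  refine .of_dotProduct_mulVec_pos ?_ fun v hv => ?_
  · ext i j
    fin_cases i <;> fin_cases j <;> simp
  · have hv' : v 0 ≠ 0 ∨ v 1 ≠ 0 := by
      contrapose! hv
      ext i
      fin_cases i <;> simp [hv]
    convert quadratic_pos_of_sq_lt_mul ha hdet hv' using 1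
    simp [dotProduct, mulVec, Fin.sum_univ_two]
    ring

end

/- Writing `s = θ₂ + θ₃ = 1 - θ₁`, the inequality reduces to
`4 θ₂ θ₃ + 4 s θ₁ > 4 m / 5 - 3 m² / 25`; the two products are bounded below by
`(θ₂ - m)(θ₃ - m) ≥ 0` and `(θ₁ - m)(s - 2m) ≥ 0`. -/
theorem block2_offDiag_sq_lt_diag_mul {θ₁ θ₂ θ₃ m : ℝ} (hm : 0 < m) (hsum : θ₁ + θ₂ + θ₃ = 1)
    (hm₁ : m ≤ θ₁) (hm₂ : m ≤ θ₂) (hm₃ : m ≤ θ₃) :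
    ((3/8) * (θ₂ - θ₃)) ^ 2 < (9/8) * (1 - θ₁ - m / 5) * ((3/8) * (θ₁ + 1/3 - m / 5)) := by
  nlinarith [mul_nonneg (sub_nonneg.2 hm₂) (sub_nonneg.2 hm₃),
    mul_nonneg (sub_nonneg.2 hm₁) (by linarith : (0 : ℝ) ≤ θ₂ + θ₃ - 2 * m)]

/-- Positive definiteness of the 2×2 block
[[(9/8)(1−θ₁−θ/5), (3/8)(θ₂−θ₃)], [(3/8)(θ₂−θ₃), (3/8)(θ₁+1/3−θ/5)]]
for θ₁, θ₂, θ₃ ∈ (0,1) summing to 1, θ = min{θ₁,θ₂,θ₃}. -/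
theorem block2_posdef (θ₁ θ₂ θ₃ : ℝ)
    (h1 : θ₁ ∈ Set.Ioo (0 : ℝ) 1) (h2 : θ₂ ∈ Set.Ioo (0 : ℝ) 1) (h3 : θ₃ ∈ Set.Ioo (0 : ℝ) 1)
    (hsum : θ₁ + θ₂ + θ₃ = 1) :
    Matrix.PosDef !![(9/8) * (1 - θ₁ - min θ₁ (min θ₂ θ₃) / 5), (3/8) * (θ₂ - θ₃);
                     (3/8) * (θ₂ - θ₃), (3/8) * (θ₁ + 1/3 - min θ₁ (min θ₂ θ₃) / 5)] := by
  set θ := min θ₁ (min θ₂ θ₃)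
  have hθ : 0 < θ := lt_min h1.1 (lt_min h2.1 h3.1)
  have hθ₁ : θ ≤ θ₁ := min_le_left _ _
  have hθ₂ : θ ≤ θ₂ := (min_le_right _ _).trans (min_le_left _ _)
  have hθ₃ : θ ≤ θ₃ := (min_le_right _ _).trans (min_le_right _ _)
  exact posDef_fin_two_of_sq_lt_mul (by linarith)
    (block2_offDiag_sq_lt_diag_mul hθ hsum hθ₁ hθ₂ hθ₃)
end

section
/- Let θ₁, θ₂, θ₃ ∈ (0,1) with θ₁ + θ₂ + θ₃ = 1 and θ = min{θ₁, θ₂, θ₃}. Then the 2×2 symmetric matrix [[(9/4)θ₁ − (9/4)θ₁² − (9/20)θ, (3/4)θ₁(θ₃ − θ₂)], [(3/4)θ₁(θ₃ − θ₂), (1/4)(1 − θ₁) − (1/4)(θ₂ − θ₃)² − (3/20)θ]] is positive definite. -/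
open Matrix

/-!
A symmetric 2×2 matrix is positive definite once its top-left entry and its determinant are
positive. With θ₃ = 1 − θ₁ − θ₂ eliminated, the determinant is
(9/4)θ₁θ₂θ₃ − (9/20)θ(θ₁θ₂ + θ₁θ₃ + θ₂θ₃) + (27/400)θ², and θ ≤ θᵢ bounds the middle sum by
3θ₁θ₂θ₃, leaving at least (9/10)θ₁θ₂θ₃ > 0. The top-left entry is (9/4)(θ₁(1 − θ₁) − θ/5), and
θ ≤ θ₁ ≤ 1 − θ gives θ₁(1 − θ₁) ≥ θ(1 − θ) > θ/5 because θ ≤ 1/3.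
-/

theorem Matrix.posDef_fin_two_of_pos_of_det_pos {a b c : ℝ} (ha : 0 < a)
    (hdet : 0 < a * c - b ^ 2) : PosDef !![a, b; b, c] := by
  refine .of_dotProduct_mulVec_pos ?_ fun x hx ↦ ?_
  · ext i j; fin_cases i <;> fin_cases j <;> rfl
  simp only [star_trivial, dotProduct, mulVec, Fin.sum_univ_two, of_apply, cons_val', cons_val_zero,
    cons_val_one, empty_val', cons_val_fin_one]
  have hsquare : a * (x 0 * (a * x 0 + b * x 1) + x 1 * (b * x 0 + c * x 1))
      = (a * x 0 + b * x 1) ^ 2 + (a * c - b ^ 2) * x 1 ^ 2 := by ring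
  refine pos_of_mul_pos_right (hsquare ▸ ?_) ha.le
  rcases eq_or_ne (x 1) 0 with h1 | h1
  · have h0 : x 0 ≠ 0 := fun h0 ↦ hx (funext fun i ↦ by fin_cases i <;> assumption)
    have : 0 < (a * x 0) ^ 2 := by positivity
    simpa [h1] using this
  · positivity

theorem mul_one_sub_le_mul_one_sub {m x : ℝ} (hmx : m ≤ x) (hxm : x ≤ 1 - m) :
    m * (1 - m) ≤ x * (1 - x) := by
  nlinarith [mul_nonneg (sub_nonneg.2 hmx) (sub_nonneg.2 hxm)]

theorem mul_sum_mul_le_three_mul {m x y z : ℝ} (hx : 0 ≤ x) (hy : 0 ≤ y) (hz : 0 ≤ z)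
    (hmx : m ≤ x) (hmy : m ≤ y) (hmz : m ≤ z) :
    m * (x * y + x * z + y * z) ≤ 3 * (x * y * z) := by
  nlinarith [mul_le_mul_of_nonneg_left hmz (mul_nonneg hx hy),
    mul_le_mul_of_nonneg_left hmy (mul_nonneg hx hz),
    mul_le_mul_of_nonneg_left hmx (mul_nonneg hy hz)]

theorem posDef_block_of_le_of_sum_eq_one {θ₁ θ₂ θ₃ m : ℝ} (hsum : θ₁ + θ₂ + θ₃ = 1)
    (hm : 0 < m) (hm₁ : m ≤ θ₁) (hm₂ : m ≤ θ₂) (hm₃ : m ≤ θ₃) :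
    PosDef !![(9/4) * θ₁ - (9/4) * θ₁ ^ 2 - (9/20) * m, (3/4) * θ₁ * (θ₃ - θ₂);
              (3/4) * θ₁ * (θ₃ - θ₂), (1/4) * (1 - θ₁) - (1/4) * (θ₂ - θ₃) ^ 2 - (3/20) * m] := by
  have h₁ : 0 < θ₁ := hm.trans_le hm₁
  have h₂ : 0 < θ₂ := hm.trans_le hm₂
  have h₃ : 0 < θ₃ := hm.trans_le hm₃
  apply posDef_fin_two_of_pos_of_det_pos
  · have := mul_one_sub_le_mul_one_sub hm₁ (by linarith : θ₁ ≤ 1 - m)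
    nlinarith
  · have hdet : ((9/4) * θ₁ - (9/4) * θ₁ ^ 2 - (9/20) * m) *
          ((1/4) * (1 - θ₁) - (1/4) * (θ₂ - θ₃) ^ 2 - (3/20) * m) - ((3/4) * θ₁ * (θ₃ - θ₂)) ^ 2
        = 9/4 * (θ₁ * θ₂ * θ₃) - 9/20 * (m * (θ₁ * θ₂ + θ₁ * θ₃ + θ₂ * θ₃)) + 27/400 * m ^ 2 := by
      obtain rfl : θ₃ = 1 - θ₁ - θ₂ := by linarith
      ring
    have := mul_sum_mul_le_three_mul h₁.le h₂.le h₃.le hm₁ hm₂ hm₃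
    nlinarith [mul_pos (mul_pos h₁ h₂) h₃]

/-- Positive definiteness of the 2×2 block
[[(9/4)θ₁ − (9/4)θ₁² − (9/20)θ, (3/4)θ₁(θ₃−θ₂)],
 [(3/4)θ₁(θ₃−θ₂), (1/4)(1−θ₁) − (1/4)(θ₂−θ₃)² − (3/20)θ]]
for θ₁, θ₂, θ₃ ∈ (0,1) summing to 1, θ = min{θ₁,θ₂,θ₃}. -/
theorem block1_posdef (θ₁ θ₂ θ₃ : ℝ)
    (h1 : θ₁ ∈ Set.Ioo (0 : ℝ) 1) (h2 : θ₂ ∈ Set.Ioo (0 : ℝ) 1) (h3 : θ₃ ∈ Set.Ioo (0 : ℝ) 1)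
    (hsum : θ₁ + θ₂ + θ₃ = 1) :
    Matrix.PosDef !![(9/4) * θ₁ - (9/4) * θ₁ ^ 2 - (9/20) * min θ₁ (min θ₂ θ₃),
                       (3/4) * θ₁ * (θ₃ - θ₂);
                     (3/4) * θ₁ * (θ₃ - θ₂),
                       (1/4) * (1 - θ₁) - (1/4) * (θ₂ - θ₃) ^ 2
                         - (3/20) * min θ₁ (min θ₂ θ₃)] :=
  posDef_block_of_le_of_sum_eq_one hsum (lt_min h1.1 (lt_min h2.1 h3.1)) (min_le_left _ _)
    ((min_le_right _ _).trans (min_le_left _ _)) ((min_le_right _ _).trans (min_le_right _ _))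
end
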